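/- Let b ≥ 0, let κ₀ ∈ (0,1] satisfy E(φ_{1,2κ₀}) = P(φ_{1,2κ₀}) = 0, and set M* = M(φ_{1,2κ₀}) and φ = φ_{1,2κ₀}. For r > 0 define u_r(x) = e^{irx} φ(x). Then: M(u_r) = M*; P(u_r) = −r M* < 0; E(u_r) = (r²/2) M* + (r/4) ∫_ℝ |φ(x)|⁴ dx; consequently E(u_r) · M(u_r) / P(u_r)² = 1/2 + ( ∫_ℝ|φ|⁴dx ) / (4 r M*) for every r > 0, which is strictly greater than 1/2 and converges to 1/2 as r → ∞. -/

import Mathlib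

set_option maxHeartbeats 1000000


open MeasureTheory Real Complex Filter Topology

noncomputable section

/-- Mass `M(u) = ∫ |u|²`. -/
def Mass (u : ℝ → ℂ) : ℝ := ∫ x : ℝ, ‖u x‖ ^ 2

/-- Momentum `P(u) = -Im ∫ conj(u) u'`. -/
def Mom (u : ℝ → ℂ) : ℝ := -∫ x : ℝ, ((starRingEnd ℂ) (u x) * deriv u x).im

/-- `N₁(u) = -Im ∫ |u|² conj(u) u'`. -/
def N1 (u : ℝ → ℂ) : ℝ :=
  -∫ x : ℝ, ((‖u x‖ : ℂ) ^ 2 * (starRingEnd ℂ) (u x) * deriv u x).im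

/-- Energy. -/
def En (b : ℝ) (u : ℝ → ℂ) : ℝ :=
  (1 / 2) * (∫ x : ℝ, ‖deriv u x‖ ^ 2) - (1 / 4) * N1 u - (b / 6) * ∫ x : ℝ, ‖u x‖ ^ 6

/-- Action `S_{ω,c}`. -/
def Act (b ω c : ℝ) (u : ℝ → ℂ) : ℝ := En b u + (ω / 2) * Mass u + (c / 2) * Mom u

/-- `K_{ω,c}`. -/
def Kf (b ω c : ℝ) (u : ℝ → ℂ) : ℝ :=
  -(∫ x : ℝ, ‖deriv u x‖ ^ 2) - (b / 3) * (∫ x : ℝ, ‖u x‖ ^ 6)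
    + 4 * En b u + ω * Mass u + c * Mom u

/-- `u ∈ H¹(ℝ;ℂ)`: `u` and `u'` in `L²`. -/
def InH1 (u : ℝ → ℂ) : Prop := MemLp u 2 volume ∧ MemLp (deriv u) 2 volume

/-- The soliton profile `Φ_{ω,c}` (with `γ = 1 + 16b/3`). -/
def PhiProf (b ω c : ℝ) (x : ℝ) : ℝ :=
  if 4 * ω > c ^ 2 then
    Real.sqrt (2 * (4 * ω - c ^ 2) /
      (Real.sqrt (c ^ 2 + (1 + 16 * b / 3) * (4 * ω - c ^ 2))
          * Real.cosh (Real.sqrt (4 * ω - c ^ 2) * x) - c))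
  else
    Real.sqrt (4 * c / (c ^ 2 * x ^ 2 + (1 + 16 * b / 3)))

/-- The soliton `φ_{ω,c}`. -/
def phiSol (b ω c : ℝ) (x : ℝ) : ℂ :=
  (PhiProf b ω c x : ℂ) *
    Complex.exp (Complex.I *
      (((c / 2) * x - (1 / 4) * ∫ y in Set.Iic x, (PhiProf b ω c y) ^ 2 : ℝ) : ℂ))

/-- Rescaling `u_λ(x) = λ^{1/2} u(λ x)`. -/
def resc (l : ℝ) (u : ℝ → ℂ) (x : ℝ) : ℂ := (Real.sqrt l : ℂ) * u (l * x)

/-- The `H¹` norm. -/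
def H1norm (f : ℝ → ℂ) : ℝ :=
  Real.sqrt ((∫ x : ℝ, ‖f x‖ ^ 2) + ∫ x : ℝ, ‖deriv f x‖ ^ 2)

end

lemma cosh_quad (x : ℝ) : 1 + x ^ 2 / 2 ≤ Real.cosh x := by
  have h : Real.cosh x = 1 + 2 * Real.sinh (x / 2) ^ 2 := by
    have h1 := Real.cosh_two_mul (x / 2)
    have h2 := Real.cosh_sq (x / 2)
    rw [show 2 * (x / 2) = x by ring] at h1
    rw [h1, h2]; ring
  have h3 : |x / 2| ≤ Real.sinh |x / 2| := Real.self_le_sinh_iff.mpr (abs_nonneg _)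
  have h4 : (x / 2) ^ 2 ≤ Real.sinh (x / 2) ^ 2 := by
    rw [← _root_.sq_abs (x / 2), ← _root_.sq_abs (Real.sinh (x / 2)), Real.abs_sinh]
    exact pow_le_pow_left₀ (abs_nonneg _) h3 2
  nlinarith

lemma hasDerivAt_primitive_Iic {f : ℝ → ℝ} (hf : Integrable f) (hc : Continuous f) (x : ℝ) :
    HasDerivAt (fun t => ∫ y in Set.Iic t, f y) (f x) x := by
  have key : ∀ t : ℝ, ∫ y in Set.Iic t, f y
      = (∫ y in Set.Iic (0:ℝ), f y) + ∫ y in (0:ℝ)..t, f y := by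
    intro t
    rw [← intervalIntegral.integral_Iic_sub_Iic hf.integrableOn hf.integrableOn]
    ring
  have h2 : HasDerivAt (fun t => ∫ y in (0:ℝ)..t, f y) (f x) x :=
    intervalIntegral.integral_hasDerivAt_right (hc.intervalIntegrable 0 x)
      hc.aestronglyMeasurable.stronglyMeasurableAtFilter hc.continuousAt
  have h3 := h2.const_add (∫ y in Set.Iic (0:ℝ), f y)
  have heq : (fun t => (∫ y in Set.Iic (0:ℝ), f y) + ∫ y in (0:ℝ)..t, f y)
      = fun t => ∫ y in Set.Iic t, f y := funext fun t => (key t).symm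
  rw [← heq]
  exact h3

lemma norm_exp_I_ofReal (t : ℝ) : ‖Complex.exp (Complex.I * t)‖ = 1 := by
  simp [Complex.norm_exp]

lemma conj_self_of_norm_one {E : ℂ} (hE : ‖E‖ = 1) : (starRingEnd ℂ) E * E = 1 := by
  rw [mul_comm, Complex.mul_conj]
  norm_cast
  rw [Complex.normSq_eq_norm_sq, hE]; norm_num

lemma norm_sq_complex (z : ℂ) : ‖z‖ ^ 2 = Complex.normSq z := by
  rw [Complex.sq_norm]

lemma im_helper1 (r : ℝ) (z w : ℂ) :
    ((starRingEnd ℂ) z * (Complex.I * r * z + w)).im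
      = r * ‖z‖ ^ 2 + ((starRingEnd ℂ) z * w).im := by
  rw [norm_sq_complex]
  simp [Complex.normSq_apply, Complex.mul_re, Complex.mul_im, Complex.add_re, Complex.add_im]
  ring

lemma norm_sq_helper (r : ℝ) (z w : ℂ) :
    ‖Complex.I * r * z + w‖ ^ 2
      = r ^ 2 * ‖z‖ ^ 2 + ‖w‖ ^ 2 + 2 * r * ((starRingEnd ℂ) z * w).im := by
  rw [norm_sq_complex, norm_sq_complex, norm_sq_complex]
  simp [Complex.normSq_apply, Complex.mul_re, Complex.mul_im, Complex.add_re, Complex.add_im]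
  ring

lemma im_helper2 (r : ℝ) (z w : ℂ) :
    (((‖z‖ : ℂ)) ^ 2 * ((starRingEnd ℂ) z) * (Complex.I * r * z + w)).im
      = r * ‖z‖ ^ 4 + (((‖z‖ : ℂ)) ^ 2 * (starRingEnd ℂ) z * w).im := by
  have h4 : ‖z‖ ^ 4 = Complex.normSq z ^ 2 := by
    rw [show (4:ℕ) = 2*2 by norm_num, pow_mul, norm_sq_complex]
  have h2 : ((‖z‖ : ℂ)) ^ 2 = ((Complex.normSq z : ℝ) : ℂ) := by
    norm_cast; rw [norm_sq_complex]
  rw [h4, h2]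
  simp [Complex.normSq_apply, Complex.mul_re, Complex.mul_im, Complex.add_re, Complex.add_im]
  ring

lemma mom_pointwise (r : ℝ) (E z w : ℂ) (hE : ‖E‖ = 1) :
    ((starRingEnd ℂ) (E * z) * (E * (Complex.I * r * z + w))).im
      = r * ‖z‖ ^ 2 + ((starRingEnd ℂ) z * w).im := by
  have h : (starRingEnd ℂ) (E * z) * (E * (Complex.I * r * z + w))
      = ((starRingEnd ℂ) E * E) * ((starRingEnd ℂ) z * (Complex.I * r * z + w)) := by
    rw [map_mul]; ring
  rw [h, conj_self_of_norm_one hE, one_mul, im_helper1]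

lemma n1_pointwise (r : ℝ) (E z w : ℂ) (hE : ‖E‖ = 1) :
    (((‖E * z‖ : ℂ)) ^ 2 * (starRingEnd ℂ) (E * z) * (E * (Complex.I * r * z + w))).im
      = r * ‖z‖ ^ 4 + (((‖z‖ : ℂ)) ^ 2 * (starRingEnd ℂ) z * w).im := by
  have hnm : ‖E * z‖ = ‖z‖ := by rw [norm_mul, hE, one_mul]
  rw [hnm]
  have hfact : ((‖z‖ : ℂ)) ^ 2 * (starRingEnd ℂ) (E * z) * (E * (Complex.I * r * z + w))
      = ((starRingEnd ℂ) E * E)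
        * (((‖z‖ : ℂ)) ^ 2 * (starRingEnd ℂ) z * (Complex.I * r * z + w)) := by
    rw [map_mul]; ring
  rw [hfact, conj_self_of_norm_one hE, one_mul]
  exact im_helper2 r z w

/-- Common abstract step: properties of `fun x => Real.sqrt (g x)` given a positive
differentiable `g` with controlled logarithmic derivative and decay. -/
lemma sqrt_profile_facts (g gd : ℝ → ℝ) (Cg K : ℝ)
    (hgpos : ∀ x, 0 < g x)
    (hgd : ∀ x, HasDerivAt g (gd x) x)
    (hgdc : Continuous gd)
    (hlog : ∀ x, |gd x| ≤ Cg * g x)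
    (hgbd : ∀ x, g x ≤ K * (1 + x ^ 2)⁻¹) :
    ∃ (Φd : ℝ → ℝ) (C B : ℝ),
      (∀ x, 0 < Real.sqrt (g x)) ∧ (∀ x, Real.sqrt (g x) ≤ B) ∧
      (∀ x, HasDerivAt (fun y => Real.sqrt (g y)) (Φd x) x) ∧ Continuous Φd ∧
      (∀ x, |Φd x| ≤ C * Real.sqrt (g x)) ∧
      Integrable (fun x => (Real.sqrt (g x)) ^ 2) := by
  have hgc : Continuous g := by
    rw [continuous_iff_continuousAt]; exact fun x => (hgd x).continuousAt
  have hsq : ∀ x, Real.sqrt (g x) ^ 2 = g x := fun x => Real.sq_sqrt (hgpos x).le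
  have hsqrtpos : ∀ x, 0 < Real.sqrt (g x) := fun x => Real.sqrt_pos.mpr (hgpos x)
  set Φd : ℝ → ℝ := fun x => 1 / (2 * Real.sqrt (g x)) * gd x with hΦd
  have hd : ∀ x, HasDerivAt (fun y => Real.sqrt (g y)) (Φd x) x := by
    intro x
    exact (Real.hasDerivAt_sqrt (ne_of_gt (hgpos x))).comp x (hgd x)
  have hK : 0 ≤ K := by
    have := (hgpos 0).le.trans (hgbd 0)
    nlinarith
  refine ⟨Φd, Cg / 2, Real.sqrt K, hsqrtpos, ?_, hd, ?_, ?_, ?_⟩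
  · intro x
    apply Real.sqrt_le_sqrt
    calc g x ≤ K * (1 + x ^ 2)⁻¹ := hgbd x
      _ ≤ K * 1 := by
          apply mul_le_mul_of_nonneg_left _ hK
          rw [inv_le_one_iff₀]; right; nlinarith [sq_nonneg x]
      _ = K := mul_one K
  · apply Continuous.mul _ hgdc
    apply Continuous.div continuous_const (continuous_const.mul (hgc.sqrt))
    intro x
    exact ne_of_gt (mul_pos two_pos (hsqrtpos x))
  · intro x
    rw [hΦd]
    have h1 : |1 / (2 * Real.sqrt (g x)) * gd x| = |gd x| / (2 * Real.sqrt (g x)) := by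
      rw [abs_mul, abs_of_pos (one_div_pos.mpr (mul_pos two_pos (hsqrtpos x)))]
      ring
    rw [h1, div_le_iff₀ (mul_pos two_pos (hsqrtpos x))]
    calc |gd x| ≤ Cg * g x := hlog x
      _ = Cg / 2 * Real.sqrt (g x) * (2 * Real.sqrt (g x)) := by
          linear_combination (-Cg) * hsq x
  · have : Integrable (fun x : ℝ => K * (1 + x ^ 2)⁻¹) := integrable_inv_one_add_sq.const_mul K
    refine this.mono' ((hgc.sqrt.pow 2).aestronglyMeasurable) ?_
    filter_upwards with x
    rw [Real.norm_eq_abs, abs_of_pos (pow_pos (hsqrtpos x) 2)]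
    rw [hsq x]
    exact hgbd x

lemma profile_facts (b c : ℝ) (hb : 0 ≤ b) (hc : 0 < c) (hc2 : c ^ 2 ≤ 4 * 1) :
    ∃ (Φd : ℝ → ℝ) (C B : ℝ),
      (∀ x, 0 < PhiProf b 1 c x) ∧ (∀ x, PhiProf b 1 c x ≤ B) ∧
      (∀ x, HasDerivAt (PhiProf b 1 c) (Φd x) x) ∧ Continuous Φd ∧
      (∀ x, |Φd x| ≤ C * PhiProf b 1 c x) ∧
      Integrable (fun x => (PhiProf b 1 c x) ^ 2) := by
  have hγ : (1:ℝ) ≤ 1 + 16 * b / 3 := by linarith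
  set γ : ℝ := 1 + 16 * b / 3 with hγdef
  rcases lt_or_eq_of_le hc2 with hlt | heq
  · -- nondegenerate case
    have hcond : 4 * 1 > c ^ 2 := hlt
    set m : ℝ := 4 * 1 - c ^ 2 with hmdef
    have hm : 0 < m := by rw [hmdef]; linarith
    set k : ℝ := Real.sqrt m with hkdef
    have hk : 0 < k := Real.sqrt_pos.mpr hm
    have hk2 : k ^ 2 = m := Real.sq_sqrt hm.le
    set A : ℝ := Real.sqrt (c ^ 2 + γ * m) with hAdef
    have hA0 : 0 ≤ A := Real.sqrt_nonneg _
    have hA2 : A ^ 2 = c ^ 2 + γ * m := Real.sq_sqrt (by nlinarith)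
    have hAc : c < A := by nlinarith
    set D : ℝ → ℝ := fun x => A * Real.cosh (k * x) - c with hDdef
    have hcosh1 : ∀ x, 1 ≤ Real.cosh (k * x) := fun x => Real.one_le_cosh _
    have hDge : ∀ x, (A - c) * Real.cosh (k * x) ≤ D x := by
      intro x
      have := hcosh1 x
      simp only [hDdef]
      nlinarith
    have hDpos : ∀ x, 0 < D x := by
      intro x
      have h1 := hDge x
      have h2 := hcosh1 x
      nlinarith
    set g : ℝ → ℝ := fun x => 2 * m * (D x)⁻¹ with hgdef
    set gd : ℝ → ℝ := fun x => 2 * m * (-(A * (Real.sinh (k * x) * k)) / D x ^ 2) with hgddef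
    have hDd : ∀ x, HasDerivAt D (A * (Real.sinh (k * x) * k)) x := by
      intro x
      have h1 : HasDerivAt (fun y : ℝ => k * y) k x := by
        simpa using (hasDerivAt_id x).const_mul k
      have h2 : HasDerivAt (fun y : ℝ => Real.cosh (k * y)) (Real.sinh (k * x) * k) x :=
        (Real.hasDerivAt_cosh (k * x)).comp x h1
      exact (HasDerivAt.const_mul A h2).sub_const c
    have hgd : ∀ x, HasDerivAt g (gd x) x := by
      intro x
      exact HasDerivAt.const_mul (2 * m) ((hDd x).inv (ne_of_gt (hDpos x)))
    have hDc : Continuous D :=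
      (continuous_const.mul (Real.continuous_cosh.comp
        (continuous_const.mul continuous_id))).sub continuous_const
    have hgdc : Continuous gd := by
      apply continuous_const.mul
      apply Continuous.div
      · exact (continuous_const.mul ((Real.continuous_sinh.comp
          (continuous_const.mul continuous_id)).mul continuous_const)).neg
      · exact hDc.pow 2
      · exact fun x => ne_of_gt (pow_pos (hDpos x) 2)
    have hgpos : ∀ x, 0 < g x := fun x =>
      mul_pos (by linarith) (inv_pos.mpr (hDpos x))
    have hlog : ∀ x, |gd x| ≤ (A * k / (A - c)) * g x := by
      intro x
      have hs : |Real.sinh (k * x)| ≤ Real.cosh (k * x) := by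
        have h1 := Real.cosh_sq (k * x)
        have h2 := Real.cosh_pos (k * x)
        rw [abs_le]; constructor <;> nlinarith
      have habs : |gd x| = 2 * m * (A * (|Real.sinh (k * x)| * k)) / D x ^ 2 := by
        simp only [hgddef]
        rw [abs_mul, abs_div, abs_neg]
        rw [_root_.abs_of_pos (by linarith : (0:ℝ) < 2 * m),
          _root_.abs_of_pos (pow_pos (hDpos x) 2)]
        rw [abs_mul, abs_mul]
        rw [_root_.abs_of_nonneg hA0, _root_.abs_of_nonneg hk.le]
        ring
      rw [habs, div_le_iff₀ (pow_pos (hDpos x) 2)]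
      have hDinv : (D x)⁻¹ * D x ^ 2 = D x := by
        rw [pow_two, ← mul_assoc, inv_mul_cancel₀ (ne_of_gt (hDpos x)), one_mul]
      have hCgm : A * k / (A - c) * (A - c) = A * k :=
        div_mul_cancel₀ (A * k) (ne_of_gt (sub_pos.mpr hAc))
      have e2 : A * k / (A - c) * g x * D x ^ 2 = A * k / (A - c) * (2 * m * D x) := by
        simp only [hgdef]
        linear_combination (A * k / (A - c) * (2 * m)) * hDinv
      rw [e2]
      have h10 : A * k / (A - c) * (2 * m * ((A - c) * Real.cosh (k * x)))
          ≤ A * k / (A - c) * (2 * m * D x) := by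
        exact mul_le_mul_of_nonneg_left
          (mul_le_mul_of_nonneg_left (hDge x) (by linarith : (0:ℝ) ≤ 2 * m))
          (div_nonneg (mul_nonneg hA0 hk.le) (by linarith))
      have h11 : A * k / (A - c) * (2 * m * ((A - c) * Real.cosh (k * x)))
          = 2 * m * (A * k * Real.cosh (k * x)) := by
        linear_combination (2 * m * Real.cosh (k * x)) * hCgm
      have h7 : (A * k) * |Real.sinh (k * x)| ≤ (A * k) * Real.cosh (k * x) :=
        mul_le_mul_of_nonneg_left hs (mul_nonneg hA0 hk.le)
      calc 2 * m * (A * (|Real.sinh (k * x)| * k))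
          = 2 * m * (A * k * |Real.sinh (k * x)|) := by ring
        _ ≤ 2 * m * (A * k * Real.cosh (k * x)) :=
            mul_le_mul_of_nonneg_left h7 (by linarith : (0:ℝ) ≤ 2 * m)
        _ = A * k / (A - c) * (2 * m * ((A - c) * Real.cosh (k * x))) := h11.symm
        _ ≤ A * k / (A - c) * (2 * m * D x) := h10
    have hgbd : ∀ x, g x ≤ (2 * m / ((A - c) * min 1 (k ^ 2 / 2))) * (1 + x ^ 2)⁻¹ := by
      intro x
      set ε : ℝ := (A - c) * min 1 (k ^ 2 / 2) with hεdef
      have hεpos : 0 < ε := mul_pos (by linarith) (lt_min one_pos (by positivity))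
      have hquad : 1 + (k * x) ^ 2 / 2 ≤ Real.cosh (k * x) := cosh_quad _
      have hmin1 : min 1 (k ^ 2 / 2) ≤ 1 := min_le_left _ _
      have hmin2 : min 1 (k ^ 2 / 2) ≤ k ^ 2 / 2 := min_le_right _ _
      have hminpos : 0 < min 1 (k ^ 2 / 2) := lt_min one_pos (by positivity)
      have h6 : min 1 (k ^ 2 / 2) * (1 + x ^ 2) ≤ Real.cosh (k * x) := by
        nlinarith [sq_nonneg x, mul_pow k x 2]
      have h5 : ε * (1 + x ^ 2) ≤ D x :=
        calc ε * (1 + x ^ 2) = (A - c) * (min 1 (k ^ 2 / 2) * (1 + x ^ 2)) := by rw [hεdef]; ring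
          _ ≤ (A - c) * Real.cosh (k * x) := mul_le_mul_of_nonneg_left h6 (by linarith)
          _ ≤ D x := hDge x
      have h9 : g x ≤ 2 * m * (ε * (1 + x ^ 2))⁻¹ := by
        apply mul_le_mul_of_nonneg_left _ (by linarith : (0:ℝ) ≤ 2 * m)
        exact inv_anti₀ (by positivity) h5
      calc g x ≤ 2 * m * (ε * (1 + x ^ 2))⁻¹ := h9
        _ = (2 * m / ε) * (1 + x ^ 2)⁻¹ := by
            rw [mul_inv]; ring
    have hfun : PhiProf b 1 c = fun x => Real.sqrt (g x) := by
      funext x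
      simp only [PhiProf, if_pos hcond]
      rw [div_eq_mul_inv]
    obtain ⟨Φd, C, B, h1, h2, h3, h4, h5, h6⟩ :=
      sqrt_profile_facts g gd (A * k / (A - c)) (2 * m / ((A - c) * min 1 (k ^ 2 / 2)))
        hgpos hgd hgdc hlog hgbd
    rw [hfun]
    exact ⟨Φd, C, B, h1, h2, h3, h4, h5, h6⟩
  · -- degenerate case
    have hcond : ¬ (4 * 1 > c ^ 2) := not_lt.mpr (le_of_eq heq.symm)
    set Q : ℝ → ℝ := fun x => c ^ 2 * x ^ 2 + γ with hQdef
    have hQpos : ∀ x, 0 < Q x := by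
      intro x
      have : (0:ℝ) ≤ c ^ 2 * x ^ 2 := by positivity
      simp only [hQdef]
      nlinarith
    set g : ℝ → ℝ := fun x => 4 * c * (Q x)⁻¹ with hgdef
    set gd : ℝ → ℝ := fun x => 4 * c * (-(c ^ 2 * (2 * x)) / Q x ^ 2) with hgddef
    have hQd : ∀ x, HasDerivAt Q (c ^ 2 * (2 * x)) x := by
      intro x
      have h1 : HasDerivAt (fun y : ℝ => c ^ 2 * y ^ 2) (c ^ 2 * (2 * x)) x := by
        simpa using HasDerivAt.const_mul (c ^ 2) (hasDerivAt_pow 2 x)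
      exact h1.add_const γ
    have hgd : ∀ x, HasDerivAt g (gd x) x := by
      intro x
      exact HasDerivAt.const_mul (4 * c) ((hQd x).inv (ne_of_gt (hQpos x)))
    have hQc : Continuous Q :=
      ((continuous_const.mul ((continuous_id.pow 2)))).add continuous_const
    have hgdc : Continuous gd := by
      apply continuous_const.mul
      apply Continuous.div
      · exact (continuous_const.mul (continuous_const.mul continuous_id)).neg
      · exact hQc.pow 2
      · exact fun x => ne_of_gt (pow_pos (hQpos x) 2)
    have hgpos : ∀ x, 0 < g x := fun x =>
      mul_pos (by linarith) (inv_pos.mpr (hQpos x))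
    have hlog : ∀ x, |gd x| ≤ c * g x := by
      intro x
      have habs : |gd x| = 4 * c * (c ^ 2 * (2 * |x|)) / Q x ^ 2 := by
        simp only [hgddef]
        rw [abs_mul, abs_div, abs_neg]
        rw [_root_.abs_of_pos (by linarith : (0:ℝ) < 4 * c),
          _root_.abs_of_pos (pow_pos (hQpos x) 2)]
        rw [abs_mul, abs_mul]
        rw [_root_.abs_of_nonneg (sq_nonneg c), _root_.abs_of_nonneg (by norm_num : (0:ℝ) ≤ 2)]
        ring
      rw [habs, div_le_iff₀ (pow_pos (hQpos x) 2)]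
      have hQinv : (Q x)⁻¹ * Q x ^ 2 = Q x := by
        rw [pow_two, ← mul_assoc, inv_mul_cancel₀ (ne_of_gt (hQpos x)), one_mul]
      have e2 : c * g x * Q x ^ 2 = (4 * c * c) * Q x := by
        simp only [hgdef]
        linear_combination (c * (4 * c)) * hQinv
      rw [e2]
      have hQx : 2 * c * |x| ≤ Q x := by
        simp only [hQdef]
        nlinarith [sq_nonneg (c * |x| - 1), _root_.sq_abs x]
      nlinarith [mul_le_mul_of_nonneg_left hQx (by positivity : (0:ℝ) ≤ 2 * c * c)]
    have hgbd : ∀ x, g x ≤ (4 * c / min (c ^ 2) γ) * (1 + x ^ 2)⁻¹ := by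
      intro x
      set ε : ℝ := min (c ^ 2) γ with hεdef
      have hεpos : 0 < ε := lt_min (by positivity) (by linarith)
      have hmin1 : ε ≤ c ^ 2 := min_le_left _ _
      have hmin2 : ε ≤ γ := min_le_right _ _
      have h5 : ε * (1 + x ^ 2) ≤ Q x := by
        simp only [hQdef]
        nlinarith [sq_nonneg x]
      have h9 : g x ≤ 4 * c * (ε * (1 + x ^ 2))⁻¹ := by
        apply mul_le_mul_of_nonneg_left _ (by linarith : (0:ℝ) ≤ 4 * c)
        exact inv_anti₀ (by positivity) h5
      calc g x ≤ 4 * c * (ε * (1 + x ^ 2))⁻¹ := h9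
        _ = (4 * c / ε) * (1 + x ^ 2)⁻¹ := by rw [mul_inv]; ring
    have hfun : PhiProf b 1 c = fun x => Real.sqrt (g x) := by
      funext x
      simp only [PhiProf, if_neg hcond]
      rw [div_eq_mul_inv]
    obtain ⟨Φd, C, B, h1, h2, h3, h4, h5, h6⟩ :=
      sqrt_profile_facts g gd c (4 * c / min (c ^ 2) γ) hgpos hgd hgdc hlog hgbd
    rw [hfun]
    exact ⟨Φd, C, B, h1, h2, h3, h4, h5, h6⟩

lemma phiSol_facts (b c : ℝ) (Φd : ℝ → ℝ) (B : ℝ)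
    (hpos : ∀ x, 0 < PhiProf b 1 c x)
    (hbdd : ∀ x, PhiProf b 1 c x ≤ B)
    (hderiv : ∀ x, HasDerivAt (PhiProf b 1 c) (Φd x) x)
    (hΦdc : Continuous Φd)
    (hint : Integrable (fun x => (PhiProf b 1 c x) ^ 2)) :
    ∃ φd : ℝ → ℂ, Continuous (phiSol b 1 c) ∧ Continuous φd ∧
      (∀ x, HasDerivAt (phiSol b 1 c) (φd x) x) ∧
      (∀ x, ‖φd x‖ ≤ |Φd x| + (|c| / 2 + B ^ 2 / 4) * PhiProf b 1 c x) ∧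
      (∀ x, ‖phiSol b 1 c x‖ = PhiProf b 1 c x) := by
  set Φ := PhiProf b 1 c with hΦ
  have hΦc : Continuous Φ := by
    rw [continuous_iff_continuousAt]; exact fun x => (hderiv x).continuousAt
  have hsqc : Continuous fun y => Φ y ^ 2 := hΦc.pow 2
  set θ : ℝ → ℝ := fun x => (c / 2) * x - (1 / 4) * ∫ y in Set.Iic x, Φ y ^ 2 with hθdef
  have hθd : ∀ x, HasDerivAt θ (c / 2 - 1 / 4 * Φ x ^ 2) x := by
    intro x
    have h1 : HasDerivAt (fun x : ℝ => (c / 2) * x) (c / 2) x := by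
      simpa using (hasDerivAt_id x).const_mul (c / 2)
    have h2 := HasDerivAt.const_mul (1 / 4 : ℝ) (hasDerivAt_primitive_Iic hint hsqc x)
    rw [hθdef]
    exact h1.sub h2
  have hθc : Continuous θ := by
    rw [continuous_iff_continuousAt]; exact fun x => (hθd x).continuousAt
  have hφeq : phiSol b 1 c = fun x => (Φ x : ℂ) * Complex.exp (Complex.I * (θ x : ℂ)) := by
    funext x; simp only [phiSol, hΦ, hθdef]
  set φd : ℝ → ℂ := fun x =>
    (Φd x : ℂ) * Complex.exp (Complex.I * (θ x : ℂ))
      + (Φ x : ℂ) * (Complex.exp (Complex.I * (θ x : ℂ))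
          * (Complex.I * ((c / 2 - 1 / 4 * Φ x ^ 2 : ℝ) : ℂ))) with hφd
  have hEc : Continuous fun x => Complex.exp (Complex.I * (θ x : ℂ)) :=
    (Complex.continuous_exp.comp (continuous_const.mul (Complex.continuous_ofReal.comp hθc)))
  have hd : ∀ x, HasDerivAt (phiSol b 1 c) (φd x) x := by
    intro x
    rw [hφeq]
    have hE : HasDerivAt (fun x => Complex.exp (Complex.I * (θ x : ℂ)))
        (Complex.exp (Complex.I * (θ x : ℂ))
          * (Complex.I * ((c / 2 - 1 / 4 * Φ x ^ 2 : ℝ) : ℂ))) x := by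
      exact (HasDerivAt.const_mul Complex.I ((hθd x).ofReal_comp)).cexp
    exact ((hderiv x).ofReal_comp).mul hE
  refine ⟨φd, ?_, ?_, hd, ?_, ?_⟩
  · rw [hφeq]
    exact (Complex.continuous_ofReal.comp hΦc).mul hEc
  · apply Continuous.add
    · exact (Complex.continuous_ofReal.comp hΦdc).mul hEc
    · exact (Complex.continuous_ofReal.comp hΦc).mul
        (hEc.mul (continuous_const.mul (Complex.continuous_ofReal.comp
          ((continuous_const.sub (continuous_const.mul hsqc))))))
  · intro x
    have h1 : ‖φd x‖ ≤ ‖(Φd x : ℂ) * Complex.exp (Complex.I * (θ x : ℂ))‖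
        + ‖(Φ x : ℂ) * (Complex.exp (Complex.I * (θ x : ℂ))
            * (Complex.I * ((c / 2 - 1 / 4 * Φ x ^ 2 : ℝ) : ℂ)))‖ := norm_add_le _ _
    have e1 : ‖(Φd x : ℂ) * Complex.exp (Complex.I * (θ x : ℂ))‖ = |Φd x| := by
      rw [norm_mul, norm_exp_I_ofReal, mul_one, Complex.norm_real, Real.norm_eq_abs]
    have e2 : ‖(Φ x : ℂ) * (Complex.exp (Complex.I * (θ x : ℂ))
        * (Complex.I * ((c / 2 - 1 / 4 * Φ x ^ 2 : ℝ) : ℂ)))‖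
        = Φ x * |c / 2 - 1 / 4 * Φ x ^ 2| := by
      rw [norm_mul, norm_mul, norm_exp_I_ofReal, one_mul, norm_mul, Complex.norm_I, one_mul,
        Complex.norm_real, Real.norm_eq_abs, Complex.norm_real, Real.norm_eq_abs,
        abs_of_pos (hpos x)]
    have hb2 : |c / 2 - 1 / 4 * Φ x ^ 2| ≤ |c| / 2 + B ^ 2 / 4 := by
      have h3 : Φ x ^ 2 ≤ B ^ 2 := by nlinarith [hpos x, hbdd x]
      have h4 : (0:ℝ) ≤ Φ x ^ 2 := sq_nonneg _
      rcases abs_cases (c / 2 - 1 / 4 * Φ x ^ 2) with ⟨h, _⟩ | ⟨h, _⟩ <;> rw [h] <;>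
        nlinarith [le_abs_self c, neg_abs_le c]
    calc ‖φd x‖ ≤ |Φd x| + Φ x * |c / 2 - 1 / 4 * Φ x ^ 2| := by rw [← e1, ← e2]; exact h1
      _ ≤ |Φd x| + (|c| / 2 + B ^ 2 / 4) * Φ x := by
          nlinarith [mul_le_mul_of_nonneg_left hb2 (hpos x).le]
  · intro x
    rw [hφeq]
    simp only []
    rw [norm_mul, norm_exp_I_ofReal, mul_one, Complex.norm_real, Real.norm_eq_abs,
      abs_of_pos (hpos x)]

/-- Galilean-boosted degenerate solitons: `u_r(x) = e^{irx} φ_{1,2κ₀}(x)` has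
critical mass, negative momentum, and `E M / P² = 1/2 + (∫|φ|⁴)/(4rM*) → 1/2`. -/
theorem boosted_soliton_energy_momentum_ratio (b : ℝ) (hb : 0 ≤ b)
    (κ₀ : ℝ) (hκ : κ₀ ∈ Set.Ioc (0 : ℝ) 1)
    (hE0 : En b (phiSol b 1 (2 * κ₀)) = 0) (hP0 : Mom (phiSol b 1 (2 * κ₀)) = 0)
    (ur : ℝ → ℝ → ℂ)
    (hur : ∀ r x : ℝ, ur r x = Complex.exp (Complex.I * (r * x)) * phiSol b 1 (2 * κ₀) x) :
    (∀ r : ℝ, 0 < r →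
      Mass (ur r) = Mass (phiSol b 1 (2 * κ₀))
      ∧ Mom (ur r) = -r * Mass (phiSol b 1 (2 * κ₀))
      ∧ Mom (ur r) < 0
      ∧ En b (ur r) = (r ^ 2 / 2) * Mass (phiSol b 1 (2 * κ₀))
          + (r / 4) * ∫ x : ℝ, ‖phiSol b 1 (2 * κ₀) x‖ ^ 4
      ∧ En b (ur r) * Mass (ur r) / (Mom (ur r)) ^ 2
          = 1 / 2 + (∫ x : ℝ, ‖phiSol b 1 (2 * κ₀) x‖ ^ 4)
              / (4 * r * Mass (phiSol b 1 (2 * κ₀)))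
      ∧ En b (ur r) * Mass (ur r) / (Mom (ur r)) ^ 2 > 1 / 2)
    ∧ Filter.Tendsto (fun r => En b (ur r) * Mass (ur r) / (Mom (ur r)) ^ 2)
        Filter.atTop (nhds (1 / 2)) := by
  obtain ⟨hκ0, hκ1⟩ := hκ
  have hc : 0 < 2 * κ₀ := by linarith
  have hc2 : (2 * κ₀) ^ 2 ≤ 4 * 1 := by nlinarith
  obtain ⟨Φd, C, B, hpos, hbdd, hderiv, hΦdc, hdbd, hint⟩ :=
    profile_facts b (2 * κ₀) hb hc hc2
  obtain ⟨φd, hφc, hφdc, hφd, hφdbd, hnorm⟩ :=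
    phiSol_facts b (2 * κ₀) Φd B hpos hbdd hderiv hΦdc hint
  set φ : ℝ → ℂ := phiSol b 1 (2 * κ₀) with hφdef
  set Φ : ℝ → ℝ := PhiProf b 1 (2 * κ₀) with hΦdef
  have hΦc : Continuous Φ := continuous_iff_continuousAt.mpr fun x => (hderiv x).continuousAt
  set C₂ : ℝ := C + (|2 * κ₀| / 2 + B ^ 2 / 4) with hC2def
  have hC2 : ∀ x, ‖φd x‖ ≤ C₂ * Φ x := by
    intro x
    have h1 := hφdbd x
    have h2 := hdbd x
    have h3 : C₂ * Φ x = C * Φ x + (|2 * κ₀| / 2 + B ^ 2 / 4) * Φ x := by rw [hC2def]; ring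
    calc ‖φd x‖ ≤ |Φd x| + (|2 * κ₀| / 2 + B ^ 2 / 4) * Φ x := h1
      _ ≤ C * Φ x + (|2 * κ₀| / 2 + B ^ 2 / 4) * Φ x := by linarith
      _ = C₂ * Φ x := h3.symm
  have hC2nn : 0 ≤ C₂ := by
    have h1 := (norm_nonneg (φd 0)).trans (hC2 0)
    nlinarith [hpos 0]
  have hB : 0 < B := lt_of_lt_of_le (hpos 0) (hbdd 0)
  -- integrability machinery
  have hmono : ∀ (f : ℝ → ℝ), Continuous f → ∀ K : ℝ,
      (∀ x, |f x| ≤ K * Φ x ^ 2) → Integrable f := by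
    intro f hf K hK
    exact (hint.const_mul K).mono' hf.aestronglyMeasurable
      (Filter.Eventually.of_forall fun x => by
        rw [Real.norm_eq_abs]; exact hK x)
  set g : ℝ → ℝ := fun x => ((starRingEnd ℂ) (φ x) * φd x).im with hgdef
  set h : ℝ → ℝ := fun x => (((‖φ x‖ : ℂ)) ^ 2 * (starRingEnd ℂ) (φ x) * φd x).im with hhdef
  have hgc : Continuous g :=
    Complex.continuous_im.comp ((Complex.continuous_conj.comp hφc).mul hφdc)
  have hhc : Continuous h := by
    apply Complex.continuous_im.comp
    exact ((Complex.continuous_ofReal.comp hφc.norm).pow 2).mul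
      (Complex.continuous_conj.comp hφc) |>.mul hφdc
  have hgbound : ∀ x, |g x| ≤ C₂ * Φ x ^ 2 := by
    intro x
    have h1 : |g x| ≤ ‖(starRingEnd ℂ) (φ x) * φd x‖ := by
      exact Complex.abs_im_le_norm _
    rw [norm_mul, RCLike.norm_conj, hnorm x] at h1
    calc |g x| ≤ Φ x * ‖φd x‖ := h1
      _ ≤ Φ x * (C₂ * Φ x) := mul_le_mul_of_nonneg_left (hC2 x) (hpos x).le
      _ = C₂ * Φ x ^ 2 := by ring
  have hhbound : ∀ x, |h x| ≤ (B ^ 2 * C₂) * Φ x ^ 2 := by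
    intro x
    have h1 : |h x| ≤ ‖((‖φ x‖ : ℂ)) ^ 2 * (starRingEnd ℂ) (φ x) * φd x‖ := by
      exact Complex.abs_im_le_norm _
    have e1 : ‖((‖φ x‖ : ℂ)) ^ 2‖ = Φ x ^ 2 := by
      rw [norm_pow, Complex.norm_real, Real.norm_eq_abs,
        _root_.abs_of_nonneg (norm_nonneg _), hnorm x]
    have e2 : ‖(starRingEnd ℂ) (φ x)‖ = Φ x := by rw [RCLike.norm_conj, hnorm x]
    rw [norm_mul, norm_mul, e1, e2] at h1
    calc |h x| ≤ Φ x ^ 2 * Φ x * ‖φd x‖ := h1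
      _ ≤ Φ x ^ 2 * Φ x * (C₂ * Φ x) := by
          exact mul_le_mul_of_nonneg_left (hC2 x) (mul_nonneg (sq_nonneg _) (hpos x).le)
      _ ≤ (B ^ 2 * C₂) * Φ x ^ 2 := by
          have h5 : Φ x ^ 2 ≤ B ^ 2 := by nlinarith [hpos x, hbdd x]
          nlinarith [mul_le_mul_of_nonneg_right h5 (mul_nonneg hC2nn (sq_nonneg (Φ x)))]
  have intg : Integrable g := hmono g hgc C₂ hgbound
  have inth : Integrable h := hmono h hhc (B ^ 2 * C₂) hhbound
  have intd2 : Integrable (fun x => ‖φd x‖ ^ 2) := by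
    apply hmono (fun x => ‖φd x‖ ^ 2) (hφdc.norm.pow 2) (C₂ ^ 2)
    intro x
    rw [_root_.abs_of_nonneg (by positivity)]
    nlinarith [mul_self_le_mul_self (norm_nonneg (φd x)) (hC2 x)]
  have int4 : Integrable (fun x => Φ x ^ 4) := by
    apply hmono (fun x => Φ x ^ 4) (hΦc.pow 4) (B ^ 2)
    intro x
    rw [_root_.abs_of_nonneg (by positivity)]
    have h5 : Φ x ^ 2 ≤ B ^ 2 := by nlinarith [hpos x, hbdd x]
    nlinarith [mul_le_mul_of_nonneg_right h5 (sq_nonneg (Φ x))]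
  have int6 : Integrable (fun x => Φ x ^ 6) := by
    apply hmono (fun x => Φ x ^ 6) (hΦc.pow 6) (B ^ 4)
    intro x
    rw [_root_.abs_of_nonneg (by positivity)]
    have h5 : Φ x ^ 2 ≤ B ^ 2 := by nlinarith [hpos x, hbdd x]
    have h6 : Φ x ^ 4 ≤ B ^ 4 := by nlinarith [h5, sq_nonneg (Φ x), sq_nonneg B]
    nlinarith [mul_le_mul_of_nonneg_right h6 (sq_nonneg (Φ x))]
  -- basic identities for φ
  have hφdderiv : deriv φ = φd := funext fun x => (hφd x).deriv
  have hMassφ : Mass φ = ∫ x : ℝ, Φ x ^ 2 := by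
    simp only [Mass]
    congr 1
    funext x
    rw [hnorm x]
  have hMomφ : Mom φ = -∫ x : ℝ, g x := by
    simp only [Mom, hφdderiv, hgdef]
  have hintg0 : ∫ x : ℝ, g x = 0 := by
    rw [hMomφ] at hP0; linarith
  have hN1φ : N1 φ = -∫ x : ℝ, h x := by
    simp only [N1, hφdderiv, hhdef]
  have hEnφ : En b φ = 1 / 2 * (∫ x : ℝ, ‖φd x‖ ^ 2) - 1 / 4 * N1 φ
      - b / 6 * (∫ x : ℝ, Φ x ^ 6) := by
    simp only [En, hφdderiv]
    rw [show (fun x : ℝ => ‖φ x‖ ^ 6) = fun x => Φ x ^ 6 from funext fun x => by rw [hnorm x]]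
  -- positivity of the two integrals
  have hI2pos : 0 < ∫ x : ℝ, Φ x ^ 2 := by
    rw [integral_pos_iff_support_of_nonneg (fun x => sq_nonneg (Φ x)) hint]
    have hs : Function.support (fun x : ℝ => Φ x ^ 2) = Set.univ := by
      ext x
      simp only [Function.mem_support, Set.mem_univ, iff_true]
      exact ne_of_gt (pow_pos (hpos x) 2)
    rw [hs, Real.volume_univ]
    simp
  have hI4φ : (∫ x : ℝ, ‖φ x‖ ^ 4) = ∫ x : ℝ, Φ x ^ 4 := by
    congr 1; funext x; rw [hnorm x]
  have hI4pos : 0 < ∫ x : ℝ, Φ x ^ 4 := by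
    rw [integral_pos_iff_support_of_nonneg (fun x => by positivity) int4]
    have hs : Function.support (fun x : ℝ => Φ x ^ 4) = Set.univ := by
      ext x
      simp only [Function.mem_support, Set.mem_univ, iff_true]
      exact ne_of_gt (pow_pos (hpos x) 4)
    rw [hs, Real.volume_univ]
    simp
  have hMpos : 0 < Mass φ := by rw [hMassφ]; exact hI2pos
  have main : ∀ r : ℝ, 0 < r →
      Mass (ur r) = Mass φ
      ∧ Mom (ur r) = -r * Mass φ
      ∧ Mom (ur r) < 0
      ∧ En b (ur r) = (r ^ 2 / 2) * Mass φ + (r / 4) * ∫ x : ℝ, ‖φ x‖ ^ 4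
      ∧ En b (ur r) * Mass (ur r) / (Mom (ur r)) ^ 2
          = 1 / 2 + (∫ x : ℝ, ‖φ x‖ ^ 4) / (4 * r * Mass φ)
      ∧ En b (ur r) * Mass (ur r) / (Mom (ur r)) ^ 2 > 1 / 2 := by
    intro r hr
    have hud : ∀ x : ℝ, HasDerivAt (ur r)
        (Complex.exp (Complex.I * ((r : ℂ) * (x : ℂ))) * (Complex.I * (r : ℂ) * φ x + φd x)) x := by
      intro x
      have h0 : HasDerivAt (fun y : ℝ => ((y : ℝ) : ℂ)) 1 x := by
        simpa using (hasDerivAt_id x).ofReal_comp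
      have h1 : HasDerivAt (fun y : ℝ => Complex.I * ((r : ℂ) * (y : ℂ)))
          (Complex.I * (r : ℂ)) x := by
        have h2 := HasDerivAt.const_mul (Complex.I * (r : ℂ)) h0
        simpa [mul_assoc] using h2
      have h3 := h1.cexp
      have h4 := h3.mul (hφd x)
      have h5 : Complex.exp (Complex.I * ((r : ℂ) * (x : ℂ))) * (Complex.I * (r : ℂ)) * φ x
          + Complex.exp (Complex.I * ((r : ℂ) * (x : ℂ))) * φd x
          = Complex.exp (Complex.I * ((r : ℂ) * (x : ℂ))) * (Complex.I * (r : ℂ) * φ x + φd x) := by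
        ring
      rw [h5] at h4
      exact h4.congr_of_eventuallyEq (Filter.Eventually.of_forall fun y => hur r y)
    have hudval : ∀ x : ℝ, deriv (ur r) x
        = Complex.exp (Complex.I * ((r : ℂ) * (x : ℂ))) * (Complex.I * (r : ℂ) * φ x + φd x) :=
      fun x => (hud x).deriv
    have hEnorm : ∀ x : ℝ, ‖Complex.exp (Complex.I * ((r : ℂ) * (x : ℂ)))‖ = 1 := by
      intro x
      rw [Complex.norm_exp]
      simp [Complex.mul_re, Complex.mul_im]
    have hnormu : ∀ x, ‖ur r x‖ = Φ x := by
      intro x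
      rw [hur r x, norm_mul, hEnorm x, one_mul, hnorm x]
    have hMassu : Mass (ur r) = Mass φ := by
      rw [hMassφ]
      simp only [Mass]
      congr 1
      funext x
      rw [hnormu x]
    have hmompt : (fun x => ((starRingEnd ℂ) (ur r x) * deriv (ur r) x).im)
        = fun x => r * Φ x ^ 2 + g x := by
      funext x
      rw [hur r x, hudval x, mom_pointwise r _ _ _ (hEnorm x), hnorm x]
    have hMomu : Mom (ur r) = -r * Mass φ := by
      simp only [Mom]
      rw [hmompt, integral_add (hint.const_mul r) intg]
      simp only [MeasureTheory.integral_const_mul]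
      rw [hintg0, ← hMassφ]
      ring
    have hMomneg : Mom (ur r) < 0 := by
      rw [hMomu]; nlinarith [hMpos]
    have hdersq : (fun x : ℝ => ‖deriv (ur r) x‖ ^ 2)
        = fun x => r ^ 2 * Φ x ^ 2 + ‖φd x‖ ^ 2 + 2 * r * g x := by
      funext x
      rw [hudval x, norm_mul, hEnorm x, one_mul, norm_sq_helper, hnorm x]
    have hEintu : ∫ x : ℝ, ‖deriv (ur r) x‖ ^ 2
        = r ^ 2 * (∫ x : ℝ, Φ x ^ 2) + ∫ x : ℝ, ‖φd x‖ ^ 2 := by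
      have hfa : Integrable (fun x => r ^ 2 * Φ x ^ 2 + ‖φd x‖ ^ 2) volume :=
        (hint.const_mul (r ^ 2)).add intd2
      rw [hdersq, integral_add hfa (intg.const_mul (2 * r)),
        integral_add (hint.const_mul (r ^ 2)) intd2]
      simp only [MeasureTheory.integral_const_mul]
      rw [hintg0]
      ring
    have hn1pt : (fun x => (((‖ur r x‖ : ℂ)) ^ 2 * (starRingEnd ℂ) (ur r x) * deriv (ur r) x).im)
        = fun x => r * Φ x ^ 4 + h x := by
      funext x
      rw [hur r x, hudval x, n1_pointwise r _ _ _ (hEnorm x)]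
      rw [show ‖φ x‖ ^ 4 = Φ x ^ 4 from by rw [hnorm x]]
    have hN1e : N1 (ur r) = -(r * (∫ x : ℝ, Φ x ^ 4) + ∫ x : ℝ, h x) := by
      simp only [N1]
      rw [hn1pt, integral_add (int4.const_mul r) inth]
      simp only [MeasureTheory.integral_const_mul]
    have hN1u : N1 (ur r) = -r * (∫ x : ℝ, Φ x ^ 4) + N1 φ := by
      rw [hN1e, hN1φ]
      ring
    have hu6 : (fun x : ℝ => ‖ur r x‖ ^ 6) = fun x => Φ x ^ 6 :=
      funext fun x => by rw [hnormu x]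
    have hEnu : En b (ur r) = (r ^ 2 / 2) * Mass φ + (r / 4) * ∫ x : ℝ, ‖φ x‖ ^ 4 := by
      simp only [En]
      rw [hEintu, hN1u, hu6, hI4φ]
      have key : 1 / 2 * (∫ x : ℝ, ‖φd x‖ ^ 2) - 1 / 4 * N1 φ
          - b / 6 * (∫ x : ℝ, Φ x ^ 6) = 0 := by
        rw [← hEnφ]; exact hE0
      linear_combination key - (r ^ 2 / 2) * hMassφ
    have hMomsq : Mom (ur r) ^ 2 = r ^ 2 * (Mass φ) ^ 2 := by rw [hMomu]; ring
    have hratio : En b (ur r) * Mass (ur r) / Mom (ur r) ^ 2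
        = 1 / 2 + (∫ x : ℝ, ‖φ x‖ ^ 4) / (4 * r * Mass φ) := by
      rw [hEnu, hMassu, hMomsq]
      have hr0 : r ≠ 0 := ne_of_gt hr
      have hM0 : Mass φ ≠ 0 := ne_of_gt hMpos
      field_simp
    have hrat_pos : 0 < (∫ x : ℝ, ‖φ x‖ ^ 4) / (4 * r * Mass φ) := by
      apply div_pos
      · rw [hI4φ]; exact hI4pos
      · exact mul_pos (mul_pos (by norm_num) hr) hMpos
    exact ⟨hMassu, hMomu, hMomneg, hEnu, hratio, by rw [hratio]; linarith⟩
  refine ⟨main, ?_⟩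
  have h1 : Tendsto (fun r : ℝ => 4 * r * Mass φ) atTop atTop := by
    apply Filter.Tendsto.atTop_mul_const hMpos
    exact tendsto_id.const_mul_atTop (by norm_num : (0:ℝ) < 4)
  have h2 : Tendsto (fun r : ℝ => (∫ x : ℝ, ‖φ x‖ ^ 4) / (4 * r * Mass φ)) atTop (nhds 0) :=
    Filter.Tendsto.div_atTop tendsto_const_nhds h1
  have h3 : Tendsto (fun r : ℝ => 1 / 2 + (∫ x : ℝ, ‖φ x‖ ^ 4) / (4 * r * Mass φ))
      atTop (nhds (1 / 2)) := by
    have h4 := Filter.Tendsto.add (tendsto_const_nhds (x := (1/2 : ℝ)) (f := atTop)) h2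
    simpa using h4
  apply Filter.Tendsto.congr' _ h3
  filter_upwards [eventually_gt_atTop 0] with r hr
  exact ((main r hr).2.2.2.2.1).symm
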